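/- Let A ∈ ℝ^{n×n}, B ∈ ℝ^{n×p}, let Q ∈ ℝ^{n×n} be symmetric positive definite, and let P ∈ ℝ^{n×n} be symmetric such that Bᵀ P B is invertible and P = Aᵀ P A - Aᵀ P B (Bᵀ P B)⁻¹ Bᵀ P A + Q. Set K₀ = -(Bᵀ P B)⁻¹ Bᵀ P A and θ = σ_max( Q^{-1/2}·K₀ᵀ Bᵀ P B K₀·Q^{-1/2} ). Then for every complex number μ with |μ - 1|²·θ < 1, regarding all matrices as complex matrices, (A + μ·B K₀)^H P (A + μ·B K₀) - P is negative definite; in particular, if additionally P is positive definite, then A + μ·B K₀ is Schur stable. -/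

import Mathlib

/-! Since `(Bᵀ P B) K₀ = -Bᵀ P A`, the Riccati equation becomes the identity
`P - (A + μ B K₀)ᴴ P (A + μ B K₀) = Q - |μ - 1|² K₀ᵀ Bᵀ P B K₀`. With `T = Q^{1/2}` the right-hand
side is `T (1 - |μ - 1|² S) T` for `S = T⁻¹ K₀ᵀ Bᵀ P B K₀ T⁻¹`, and `1 - |μ - 1|² S` is positive
definite because `|μ - 1|² ‖S‖ < 1`. Schur stability is the Lyapunov argument: at an eigenvector
`v` of `M` with eigenvalue `λ`, `v* (P - Mᴴ P M) v = (1 - |λ|²) v* P v`. -/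

open Matrix
open scoped ComplexOrder Matrix.Norms.L2Operator

noncomputable section

/-- The positive semidefinite square root of a positive semidefinite matrix
(Mathlib's former `Matrix.PosSemidef.sqrt`, removed since; restored with its old definition). -/
def Matrix.PosSemidef.sqrt {n 𝕜 : Type*} [Fintype n] [DecidableEq n] [RCLike 𝕜]
    {A : Matrix n n 𝕜} (hA : A.PosSemidef) : Matrix n n 𝕜 :=
  hA.1.eigenvectorUnitary.1 * diagonal ((↑) ∘ (√·) ∘ hA.1.eigenvalues) *
  (star hA.1.eigenvectorUnitary : Matrix n n 𝕜)

/-- A complex square matrix is Schur stable if every eigenvalue has modulus `< 1`. -/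
def SchurStable {m : Type*} [Fintype m] [DecidableEq m] (M : Matrix m m ℂ) : Prop :=
  ∀ μ ∈ spectrum ℂ M, ‖μ‖ < 1

/-- Map a real matrix to a complex one, entrywise. -/
def matC {a b : Type*} (M : Matrix a b ℝ) : Matrix a b ℂ := M.map Complex.ofReal

namespace Matrix
variable {n 𝕜 : Type*} [Fintype n] [DecidableEq n] [RCLike 𝕜]

namespace PosSemidef
variable {A : Matrix n n 𝕜}

theorem sqrt_eq_cfc (hA : A.PosSemidef) : hA.sqrt = cfc Real.sqrt A := by
  rw [hA.1.cfc_eq, IsHermitian.cfc, Unitary.conjStarAlgAut_apply]; rfl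

theorem isHermitian_sqrt (hA : A.PosSemidef) : hA.sqrt.IsHermitian := by
  rw [sqrt_eq_cfc]; exact cfc_predicate _ _

theorem sqrt_mul_self (hA : A.PosSemidef) : hA.sqrt * hA.sqrt = A := by
  have hA' : IsSelfAdjoint A := hA.1
  calc hA.sqrt * hA.sqrt = cfc (fun x => √x * √x) A := by rw [sqrt_eq_cfc, cfc_mul ..]
    _ = cfc id A := cfc_congr fun x hx => by
        obtain ⟨i, rfl⟩ := hA.1.spectrum_real_eq_range_eigenvalues ▸ hx
        exact Real.mul_self_sqrt (hA.eigenvalues_nonneg i)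
    _ = A := cfc_id ℝ A

end PosSemidef

theorem PosDef.isUnit_sqrt {A : Matrix n n 𝕜} (hA : A.PosDef) : IsUnit hA.posSemidef.sqrt := by
  have hA' : IsSelfAdjoint A := hA.1
  rw [PosSemidef.sqrt_eq_cfc, isUnit_cfc_iff ..]
  intro x hx
  obtain ⟨i, rfl⟩ := hA.1.spectrum_real_eq_range_eigenvalues ▸ hx
  exact (Real.sqrt_pos.2 (hA.eigenvalues_pos i)).ne'

theorem posDef_one_sub_of_norm_lt_one {S : Matrix n n 𝕜} (hS : S.IsHermitian)
    (h : ‖S‖ < 1) : (1 - S).PosDef := by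
  have hH : (1 - S).IsHermitian := isHermitian_one.sub hS
  refine .of_dotProduct_mulVec_pos hH fun x hx =>
    RCLike.pos_iff.2 ⟨?_, hH.im_star_dotProduct_mulVec_self x⟩
  set v : EuclideanSpace 𝕜 n := WithLp.toLp 2 x
  have hv : 0 < ‖v‖ := norm_pos_iff.2 (by simpa [v] using hx)
  have hxx : RCLike.re (star x ⬝ᵥ x) = ‖v‖ ^ 2 := by
    rw [← inner_self_eq_norm_sq (𝕜 := 𝕜), EuclideanSpace.inner_toLp_toLp, dotProduct_comm]
  have hSx : RCLike.re (star x ⬝ᵥ S *ᵥ x) ≤ ‖S‖ * ‖v‖ ^ 2 := calc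
    RCLike.re (star x ⬝ᵥ S *ᵥ x) =
        RCLike.re (inner 𝕜 v ((EuclideanSpace.equiv n 𝕜).symm (S *ᵥ x))) := by
      rw [dotProduct_comm]; rfl
    _ ≤ ‖v‖ * (‖S‖ * ‖v‖) := (re_inner_le_norm _ _).trans (by gcongr; exact S.l2_opNorm_mulVec v)
    _ = ‖S‖ * ‖v‖ ^ 2 := by ring
  rw [sub_mulVec, one_mulVec, dotProduct_sub, map_sub, hxx]
  nlinarith [mul_pos (sub_pos.2 h) (pow_pos hv 2)]

theorem PosDef.sub_smul_of_mul_norm_lt_one {Q R : Matrix n n 𝕜} (hQ : Q.PosDef)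
    (hR : R.IsHermitian) {c : ℝ} (hc : 0 ≤ c)
    (h : c * ‖hQ.posSemidef.sqrt⁻¹ * R * hQ.posSemidef.sqrt⁻¹‖ < 1) : (Q - c • R).PosDef := by
  set T := hQ.posSemidef.sqrt
  set S := T⁻¹ * R * T⁻¹
  have hT : IsUnit T := hQ.isUnit_sqrt
  have hTH : T.IsHermitian := hQ.posSemidef.isHermitian_sqrt
  have hS : (c • S).IsHermitian := by
    rw [show S = T⁻¹ᴴ * R * T⁻¹ by rw [hTH.inv.eq]]
    exact (isHermitian_conjTranspose_mul_mul _ hR).smul (.all c)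
  have hQR : Q - c • R = star T * (1 - c • S) * T := by
    have hdet := (isUnit_iff_isUnit_det T).1 hT
    rw [star_eq_conjTranspose, hTH.eq, Matrix.mul_sub, Matrix.sub_mul, Matrix.mul_one,
      hQ.posSemidef.sqrt_mul_self, Matrix.mul_smul, Matrix.smul_mul]
    simp only [S, Matrix.mul_assoc, nonsing_inv_mul T hdet, Matrix.mul_one]
    simp only [← Matrix.mul_assoc, mul_nonsing_inv T hdet, Matrix.one_mul]
  rw [hQR, hT.posDef_star_left_conjugate_iff]
  refine posDef_one_sub_of_norm_lt_one hS ?_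
  rwa [RCLike.real_smul_eq_coe_smul (K := 𝕜), norm_smul, RCLike.norm_ofReal, abs_of_nonneg hc]

theorem PosDef.matC {M : Matrix n n ℝ} (hM : M.PosDef) : (_root_.matC M).PosDef := by
  let f := (Complex.ofRealHom).mapMatrix (m := n)
  let U : Matrix n n ℝ := hM.1.eigenvectorUnitary
  have hU : IsUnit (f U) := (Unitary.isUnit_coe (U := hM.1.eigenvectorUnitary)).map f
  have hstar : f (star U) = star (f U) :=
    conjTranspose_map Complex.ofReal fun x => (Complex.conj_ofReal x).symm
  have hD : f (diagonal (RCLike.ofReal ∘ hM.1.eigenvalues)) =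
      diagonal fun i => (hM.1.eigenvalues i : ℂ) :=
    diagonal_map (map_zero _)
  have hM' : f M = f U * diagonal (fun i => (hM.1.eigenvalues i : ℂ)) * star (f U) := by
    conv_lhs => rw [hM.1.spectral_theorem, Unitary.conjStarAlgAut_apply]
    rw [map_mul, map_mul, hD, hstar]
  change (f M).PosDef
  rw [hM', hU.posDef_star_right_conjugate_iff, posDef_diagonal_iff]
  exact fun i => Complex.zero_lt_real.2 (hM.eigenvalues_pos i)

end Matrix

theorem SchurStable.of_posDef_sub_conjTranspose_mul_mul {m : Type*} [Fintype m] [DecidableEq m]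
    {M P : Matrix m m ℂ} (hP : P.PosDef) (h : (P - Mᴴ * P * M).PosDef) : SchurStable M := by
  intro μ hμ
  rw [← spectrum_toLin', ← Module.End.hasEigenvalue_iff_mem_spectrum] at hμ
  obtain ⟨v, hv⟩ := hμ.exists_hasEigenvector
  have hMv : M *ᵥ v = μ • v := by simpa using hv.apply_eq_smul
  have hMPM : star v ⬝ᵥ (Mᴴ * P * M) *ᵥ v = Complex.normSq μ * (star v ⬝ᵥ P *ᵥ v) := by
    rw [← mulVec_mulVec, ← mulVec_mulVec, dotProduct_mulVec, ← star_mulVec, hMv, star_smul,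
      mulVec_smul, smul_dotProduct, dotProduct_smul, smul_eq_mul, smul_eq_mul, ← mul_assoc,
      Complex.star_def, ← Complex.normSq_eq_conj_mul_self]
  have hq := hP.re_dotProduct_pos hv.2
  have hd := h.re_dotProduct_pos hv.2
  rw [sub_mulVec, dotProduct_sub, hMPM, ← one_sub_mul, ← Complex.ofReal_one,
    ← Complex.ofReal_sub] at hd
  simp only [RCLike.re_to_complex, Complex.re_ofReal_mul] at hd hq
  have : Complex.normSq μ < 1 := sub_pos.1 ((pos_iff_pos_of_mul_pos hd).2 hq)
  rw [Complex.normSq_eq_norm_sq] at this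
  exact (sq_lt_one_iff₀ (norm_nonneg μ)).1 this

namespace Riccati
variable {m n α : Type*} [Fintype m] [Fintype n] [DecidableEq m] [CommRing α]
  {A P : Matrix n n α} {B : Matrix n m α} {K : Matrix m n α}

theorem mul_gain (hG : IsUnit (Bᵀ * P * B)) (hK : K = -((Bᵀ * P * B)⁻¹ * Bᵀ * P * A)) :
    Bᵀ * P * B * K = -(Bᵀ * P * A) := by
  rw [hK, Matrix.mul_neg, Matrix.mul_assoc _ Bᵀ, Matrix.mul_assoc _ (Bᵀ * P),
    Matrix.mul_nonsing_inv_cancel_left _ _ ((isUnit_iff_isUnit_det _).1 hG)]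

theorem gain_transpose_mul_mul (hG : IsUnit (Bᵀ * P * B))
    (hK : K = -((Bᵀ * P * B)⁻¹ * Bᵀ * P * A)) :
    (B * K)ᵀ * P * A = -(Kᵀ * Bᵀ * P * B * K) := calc
  (B * K)ᵀ * P * A = Kᵀ * (Bᵀ * P * A) := by simp only [transpose_mul, Matrix.mul_assoc]
  _ = -(Kᵀ * (Bᵀ * P * B * K)) := by rw [mul_gain hG hK, Matrix.mul_neg, neg_neg]
  _ = -(Kᵀ * Bᵀ * P * B * K) := by simp only [Matrix.mul_assoc]

theorem transpose_mul_mul_gain (hP : P.IsSymm) (hG : IsUnit (Bᵀ * P * B))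
    (hK : K = -((Bᵀ * P * B)⁻¹ * Bᵀ * P * A)) :
    Aᵀ * P * (B * K) = -(Kᵀ * Bᵀ * P * B * K) := by
  have h := congrArg transpose (gain_transpose_mul_mul hG hK)
  simpa only [transpose_mul, transpose_neg, transpose_transpose, hP.eq, Matrix.mul_assoc] using h

theorem transpose_mul_mul_eq (hP : P.IsSymm) (hG : IsUnit (Bᵀ * P * B))
    (hK : K = -((Bᵀ * P * B)⁻¹ * Bᵀ * P * A)) {Q : Matrix n n α}
    (hric : P = Aᵀ * P * A - Aᵀ * P * B * (Bᵀ * P * B)⁻¹ * Bᵀ * P * A + Q) :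
    Aᵀ * P * A = P + Kᵀ * Bᵀ * P * B * K - Q := by
  have h : Aᵀ * P * B * (Bᵀ * P * B)⁻¹ * Bᵀ * P * A = Kᵀ * Bᵀ * P * B * K := calc
    _ = -(Aᵀ * P * B * ((Bᵀ * P * B)⁻¹ * (Bᵀ * P * B * K))) := by
      rw [mul_gain hG hK, Matrix.mul_neg, Matrix.mul_neg, neg_neg]
      simp only [Matrix.mul_assoc]
    _ = -(Aᵀ * P * (B * K)) := by
      rw [Matrix.nonsing_inv_mul_cancel_left _ _ ((isUnit_iff_isUnit_det _).1 hG),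
        Matrix.mul_assoc]
    _ = Kᵀ * Bᵀ * P * B * K := by rw [transpose_mul_mul_gain hP hG hK, neg_neg]
  calc Aᵀ * P * A = (Aᵀ * P * A - Kᵀ * Bᵀ * P * B * K + Q) + Kᵀ * Bᵀ * P * B * K - Q := by abel
    _ = P + Kᵀ * Bᵀ * P * B * K - Q := by rw [← h, ← hric]
end Riccati

theorem matC_sub_conjTranspose_mul_mul {n : Type*} [Fintype n] [DecidableEq n]
    {X Y P Q R : Matrix n n ℝ}
    (hXX : Xᵀ * P * X = P + R - Q) (hXY : Xᵀ * P * Y = -R) (hYX : Yᵀ * P * X = -R)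
    (hYY : Yᵀ * P * Y = R) (μ : ℂ) :
    matC P - (matC X + μ • matC Y)ᴴ * matC P * (matC X + μ • matC Y) =
      matC (Q - Complex.normSq (μ - 1) • R) := by
  let f := (Complex.ofRealHom).mapMatrix (m := n)
  have hH (M : Matrix n n ℝ) : (f M)ᴴ = f Mᵀ :=
    (conjTranspose_map Complex.ofReal fun x => (Complex.conj_ofReal x).symm).symm
  have hf (M N : Matrix n n ℝ) : f Mᵀ * f P * f N = f (Mᵀ * P * N) := by simp only [map_mul]
  have hsmul (c : ℝ) (M : Matrix n n ℝ) : f (c • M) = (c : ℂ) • f M := by ext; simp [f]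
  have hnormSq : ((Complex.normSq (μ - 1) : ℝ) : ℂ) = (star μ - 1) * (μ - 1) := by
    rw [Complex.normSq_eq_conj_mul_self, Complex.star_def, map_sub, map_one]
  change f P - (f X + μ • f Y)ᴴ * f P * (f X + μ • f Y) = f (Q - _)
  rw [conjTranspose_add, conjTranspose_smul, hH, hH]
  simp only [add_mul, mul_add, smul_mul_assoc, mul_smul_comm, hf, hXX, hXY, hYX, hYY,
    map_sub, map_add, map_neg, hsmul, hnormSq]
  module

/-- Riccati-based consensus region used in Theorem 5: with
`θ = σ_max(Q^{-1/2} K₀ᵀ Bᵀ P B K₀ Q^{-1/2})`, every `μ` in the disc `|μ-1|² θ < 1` yields a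
Lyapunov decrease for `A + μ B K₀` with certificate `P`; `σ_max` is realized as the L2
operator norm and `Q^{-1/2}` as the inverse of the PSD square root of `Q`. -/
theorem riccati_consensus_region_disc {n p : ℕ}
    (A : Matrix (Fin n) (Fin n) ℝ) (B : Matrix (Fin n) (Fin p) ℝ)
    (Q : Matrix (Fin n) (Fin n) ℝ) (hQ : Q.PosDef)
    (P : Matrix (Fin n) (Fin n) ℝ) (hPsymm : P.IsSymm)
    (hBPB : IsUnit (Bᵀ * P * B))
    (hric : P = Aᵀ * P * A - Aᵀ * P * B * (Bᵀ * P * B)⁻¹ * Bᵀ * P * A + Q)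
    (K₀ : Matrix (Fin p) (Fin n) ℝ) (hK₀ : K₀ = -((Bᵀ * P * B)⁻¹ * Bᵀ * P * A))
    (θ : ℝ)
    (hθ : θ = ‖hQ.posSemidef.sqrt⁻¹ * (K₀ᵀ * Bᵀ * P * B * K₀) * hQ.posSemidef.sqrt⁻¹‖) :
    ∀ μ : ℂ, Complex.normSq (μ - 1) * θ < 1 →
      (matC P - (matC A + μ • matC (B * K₀))ᴴ * matC P * (matC A + μ • matC (B * K₀))).PosDef
      ∧ (P.PosDef → SchurStable (matC A + μ • matC (B * K₀))) := by
  intro μ hμ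
  have hR : (K₀ᵀ * Bᵀ * P * B * K₀).IsHermitian := by
    have h := isHermitian_conjTranspose_mul_mul (B * K₀) (hPsymm : Pᴴ = P)
    simpa only [conjTranspose_eq_transpose_of_trivial, transpose_mul, Matrix.mul_assoc] using h
  have hdecrease := matC_sub_conjTranspose_mul_mul
    (Riccati.transpose_mul_mul_eq hPsymm hBPB hK₀ hric)
    (Riccati.transpose_mul_mul_gain hPsymm hBPB hK₀) (Riccati.gain_transpose_mul_mul hBPB hK₀)
    (by simp only [transpose_mul, Matrix.mul_assoc]) μ
  have hpos := (hQ.sub_smul_of_mul_norm_lt_one hR (Complex.normSq_nonneg _) (hθ ▸ hμ)).matC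
  rw [← hdecrease] at hpos
  exact ⟨hpos, fun hP => .of_posDef_sub_conjTranspose_mul_mul hP.matC hpos⟩
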